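/- kℒ_n is a subalgebra of kL_n: for all labeled forests X, Y ∈ L_n, the product [X]•[Y] of their Pólya orbit sums is a k-linear combination of Pólya orbit sums [Z] with Z ∈ L_n. -/

import Mathlib

set_option maxHeartbeats 1000000

/-! # Common definitions: trees, forests, descent algebras -/

/-- Labeled binary trees: leaves carry a natural number (positive in valid forests),
internal nodes carry a label. -/
inductive LTree : Type
  | leaf : ℕ → LTree
  | node : ℕ → LTree → LTree → LTree
  deriving DecidableEq

instance : Inhabited LTree := ⟨LTree.leaf 1⟩

/-- Unlabeled binary trees with natural number leaves. -/
inductive UTree : Type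
  | leaf : ℕ → UTree
  | node : UTree → UTree → UTree
  deriving DecidableEq

instance : Inhabited UTree := ⟨UTree.leaf 1⟩

namespace LTree

/-- The value of a tree: the sum of its leaf entries. -/
def value : LTree → ℕ
  | leaf x => x
  | node _ t1 t2 => t1.value + t2.value

/-- The foliage of a tree: the list of its leaf entries, left to right. -/
def foliage : LTree → List ℕ
  | leaf x => [x]
  | node _ t1 t2 => t1.foliage ++ t2.foliage

/-- The number of internal nodes. -/
def numNodes : LTree → ℕ
  | leaf _ => 0
  | node _ t1 t2 => t1.numNodes + t2.numNodes + 1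

/-- The list of node labels (in preorder). -/
def labels : LTree → List ℕ
  | leaf _ => []
  | node i t1 t2 => i :: (t1.labels ++ t2.labels)

/-- Labels strictly increase downwards, starting above `p`. -/
def incrFrom : ℕ → LTree → Prop
  | _, leaf _ => True
  | p, node i t1 t2 => p < i ∧ incrFrom i t1 ∧ incrFrom i t2

/-- Shift all node labels up by `m`. -/
def shift (m : ℕ) : LTree → LTree
  | leaf x => leaf x
  | node i t1 t2 => node (i + m) (t1.shift m) (t2.shift m)

/-- Decrease all node labels by one. -/
def dec : LTree → LTree
  | leaf x => leaf x
  | node i t1 t2 => node (i - 1) t1.dec t2.dec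

/-- A tree is aligned if at every node the value of the left subtree is
strictly smaller than the value of the right subtree. -/
def Aligned : LTree → Prop
  | leaf _ => True
  | node _ t1 t2 => t1.value < t2.value ∧ t1.Aligned ∧ t2.Aligned

/-- Replace the leaves of a tree (left to right) by the trees from the supplied list;
returns the new tree together with the unused trees. -/
def graft : LTree → List LTree → LTree × List LTree
  | leaf x, [] => (leaf x, [])
  | leaf _, t :: ts => (t, ts)
  | node i t1 t2, ts =>
    let p1 := t1.graft ts
    let p2 := t2.graft p1.2
    (node i p1.1 p2.1, p2.2)

/-- Find the node with label `i` and return the values of its two subtrees. -/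
def findLab (i : ℕ) : LTree → Option (ℕ × ℕ)
  | leaf _ => none
  | node j t1 t2 =>
    if j = i then some (t1.value, t2.value)
    else (t1.findLab i).orElse (fun _ => t2.findLab i)

/-- The label at the root, if the tree is a node. -/
def rootLabel? : LTree → Option ℕ
  | leaf _ => none
  | node i _ _ => some i

/-- The subtree at a position (list of booleans; `false` = left, `true` = right). -/
def subtreeAt : LTree → List Bool → Option LTree
  | t, [] => some t
  | leaf _, _ :: _ => none
  | node _ t1 t2, b :: p => (if b then t2 else t1).subtreeAt p

/-- Replace the subtree at a position. -/
def replaceAt : LTree → List Bool → LTree → LTree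
  | _, [], u => u
  | leaf x, _ :: _, _ => leaf x
  | node i t1 t2, b :: p, u =>
    if b then node i t1 (t2.replaceAt p u) else node i (t1.replaceAt p u) t2

end LTree

namespace UTree

/-- The value of an unlabeled tree. -/
def value : UTree → ℕ
  | leaf x => x
  | node t1 t2 => t1.value + t2.value

/-- The foliage of an unlabeled tree. -/
def foliage : UTree → List ℕ
  | leaf x => [x]
  | node t1 t2 => t1.foliage ++ t2.foliage

/-- The number of internal nodes. -/
def numNodes : UTree → ℕ
  | leaf _ => 0
  | node t1 t2 => t1.numNodes + t2.numNodes + 1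

/-- All leaf entries are positive. -/
def leavesPos : UTree → Prop
  | leaf x => 0 < x
  | node t1 t2 => t1.leavesPos ∧ t2.leavesPos

/-- An unlabeled tree is aligned if at every node the left value is smaller
than the right value. -/
def Aligned : UTree → Prop
  | leaf _ => True
  | node t1 t2 => t1.value < t2.value ∧ t1.Aligned ∧ t2.Aligned

/-- No node has two leaf children bearing the same value. -/
def NoTwin : UTree → Prop
  | leaf _ => True
  | node t1 t2 => t1.NoTwin ∧ t2.NoTwin ∧ ¬ ∃ a, t1 = leaf a ∧ t2 = leaf a

/-- Graft: replace leaves (left to right) by trees from the supplied list. -/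
def graft : UTree → List UTree → UTree × List UTree
  | leaf x, [] => (leaf x, [])
  | leaf _, t :: ts => (t, ts)
  | node t1 t2, ts =>
    let p1 := t1.graft ts
    let p2 := t2.graft p1.2
    (node p1.1 p2.1, p2.2)

/-- The total order on unlabeled trees: compare values, then (reversed) number of
nodes, then recursively the left and right subtrees. -/
def ltt : UTree → UTree → Prop
  | leaf a, leaf b => a < b
  | leaf a, node y1 y2 => a < (node y1 y2).value
  | node x1 x2, leaf b => (node x1 x2).value ≤ b
  | node x1 x2, node y1 y2 =>
      (node x1 x2).value < (node y1 y2).value ∨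
      ((node x1 x2).value = (node y1 y2).value ∧
        ((node y1 y2).numNodes < (node x1 x2).numNodes ∨
          ((node x1 x2).numNodes = (node y1 y2).numNodes ∧
            (ltt x1 y1 ∨ (x1 = y1 ∧ ltt x2 y2)))))

end UTree

/-- Erase the node labels of a labeled tree. -/
def eraseT : LTree → UTree
  | .leaf x => .leaf x
  | .node _ t1 t2 => .node (eraseT t1) (eraseT t2)

/-! ## Labeled forests -/

/-- The squash of a forest: the list of values of its trees. -/
def squash (X : List LTree) : List ℕ := X.map LTree.value

/-- The foliage of a forest. -/
def forestFoliage (X : List LTree) : List ℕ := X.flatMap LTree.foliage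

/-- The length of a forest: its total number of nodes. -/
def forestLen (X : List LTree) : ℕ := (X.map LTree.numNodes).sum

/-- The value of a forest: the sum of the values of its trees. -/
def forestValue (X : List LTree) : ℕ := (X.map LTree.value).sum

/-- All node labels of a forest. -/
def forestLabels (X : List LTree) : List ℕ := X.flatMap LTree.labels

/-- A list of labeled trees is a labeled forest if every node's label exceeds that
of its parent, the labels used are exactly `1, 2, …, l` where `l` is the number
of nodes, and all leaves are positive. -/
def IsLForest (X : List LTree) : Prop :=
  (∀ t ∈ X, t.incrFrom 0) ∧
  (forestLabels X).Perm (List.range' 1 (forestLen X)) ∧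
  ∀ x ∈ forestFoliage X, 0 < x

/-- A forest is aligned if all its trees are. -/
def ForestAligned (X : List LTree) : Prop := ∀ t ∈ X, t.Aligned

/-- Replace the leaves of the forest `X` (left to right) by the trees of `ys`. -/
def graftForest : List LTree → List LTree → List LTree
  | [], _ => []
  | t :: ts, ys =>
    let p := t.graft ys
    p.1 :: graftForest ts p.2

/-- The product `X • Y` of labeled forests: replace the `i`-th leaf of `X` by the
`i`-th tree of `Y`, after shifting all node labels of `Y` up by `ℓ(X)`.
(Meaningful when the foliage of `X` equals the squash of `Y`.) -/
def bullet (X Y : List LTree) : List LTree :=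
  graftForest X (Y.map (LTree.shift (forestLen X)))

/-- The forest of leaves determined by a composition. -/
def leavesOf (c : List ℕ) : List LTree := c.map LTree.leaf

/-- Iterated product `X₁ • (X₂ • (⋯ • Xₗ))` of a list of forests. -/
def chainProd : List (List LTree) → List LTree
  | [] => []
  | [A] => A
  | A :: F => bullet A (chainProd F)

/-- Find the node with label `i` in a forest; return the values of its subtrees. -/
def forestFindLab (i : ℕ) : List LTree → Option (ℕ × ℕ)
  | [] => none
  | t :: r => (t.findLab i).orElse (fun _ => forestFindLab i r)

/-! ## Unlabeled forests -/

def squashU (X : List UTree) : List ℕ := X.map UTree.value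
def foliageU (X : List UTree) : List ℕ := X.flatMap UTree.foliage
def forestLenU (X : List UTree) : ℕ := (X.map UTree.numNodes).sum
def forestValueU (X : List UTree) : ℕ := (X.map UTree.value).sum

/-- An unlabeled forest is valid when all its leaves are positive. -/
def IsUForest (X : List UTree) : Prop := ∀ x ∈ foliageU X, 0 < x

def ForestAlignedU (X : List UTree) : Prop := ∀ t ∈ X, t.Aligned

def graftForestU : List UTree → List UTree → List UTree
  | [], _ => []
  | t :: ts, ys =>
    let p := t.graft ys
    p.1 :: graftForestU ts p.2

/-- The product of unlabeled forests (no label adjustment needed). -/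
def bulletU (X Y : List UTree) : List UTree := graftForestU X Y

/-- Erase all node labels of a labeled forest. -/
def eraseF (X : List LTree) : List UTree := X.map eraseT
/-! ## The difference operator δ and the map Δ -/

/-- Locate the part of the forest whose root is the node labeled `1`; return its
(0-based) index together with the forest obtained by splitting that part into its
two subtrees. -/
def splitAt1 : List LTree → Option (ℕ × List LTree)
  | [] => none
  | LTree.node i t1 t2 :: rest =>
      if i = 1 then some (0, t1 :: t2 :: rest)
      else (splitAt1 rest).map (fun p => (p.1 + 1, LTree.node i t1 t2 :: p.2))
  | LTree.leaf x :: rest => (splitAt1 rest).map (fun p => (p.1 + 1, LTree.leaf x :: p.2))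

/-- Swap the entries in positions `i` and `i+1` (0-based) of a list. -/
def swapAdj {α : Type} : ℕ → List α → List α
  | 0, a :: b :: r => b :: a :: r
  | n + 1, a :: r => a :: swapAdj n r
  | _, l => l

/-- The difference operator `δ` on the span of labeled forests: if `ℓ(X) = 0` then
`δ(X) = X`; otherwise, if the node labeled 1 is the root of the `i`-th part with
subtrees `X₁, X₂`, then `δ(X) = Y − Y.(i,i+1)` where `Y` is obtained by replacing
the `i`-th part by the parts `X₁ X₂` and decreasing all labels by one. -/
noncomputable def deltaF (k : Type) [Ring k] (X : List LTree) : (List LTree) →₀ k :=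
  match splitAt1 X with
  | none => Finsupp.single X 1
  | some (i, Y) =>
      Finsupp.single (Y.map LTree.dec) 1 - Finsupp.single (swapAdj i (Y.map LTree.dec)) 1

/-- The linear extension of `δ`. -/
noncomputable def deltaLin (k : Type) [Ring k] :
    ((List LTree) →₀ k) →ₗ[k] ((List LTree) →₀ k) :=
  (Finsupp.lift ((List LTree) →₀ k) k (List LTree)) (deltaF k)

/-- `Δ(X) = δ^{ℓ(X)}(X)`, recorded as an element of the free associative algebra
with basis the compositions (identifying a forest of length 0 with its foliage). -/
noncomputable def DeltaComp (k : Type) [Ring k] (X : List LTree) : (List ℕ) →₀ k :=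
  Finsupp.mapDomain forestFoliage
    ((fun v => deltaLin k v)^[forestLen X] (Finsupp.single X 1))

/-- The linear map `Δ : kL → kℕ*`. -/
noncomputable def DeltaMap (k : Type) [Ring k] : ((List LTree) →₀ k) →ₗ[k] ((List ℕ) →₀ k) :=
  (Finsupp.lift ((List ℕ) →₀ k) k (List LTree)) (DeltaComp k)

/-! ## Pólya orbit sums and products on the spans -/

/-- The Pólya orbit sum `[X]` of a labeled forest: the sum of all distinct
rearrangements of its parts. -/
noncomputable def pol (k : Type) [Semiring k] (X : List LTree) : (List LTree) →₀ k :=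
  ∑ Y ∈ X.permutations.toFinset, Finsupp.single Y 1

/-- The Pólya orbit sum of an unlabeled forest. -/
noncomputable def polU (k : Type) [Semiring k] (X : List UTree) : (List UTree) →₀ k :=
  ∑ Y ∈ X.permutations.toFinset, Finsupp.single Y 1

/-- The bilinear product on `kL`: `X • Y` when foliage of `X` equals squash of `Y`,
and `0` otherwise. -/
noncomputable def mulL (k : Type) [Semiring k] (f g : (List LTree) →₀ k) : (List LTree) →₀ k :=
  f.sum fun X a => g.sum fun Y b =>
    if forestFoliage X = squash Y then Finsupp.single (bullet X Y) (a * b) else 0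

/-- The bilinear product on `kM` (unlabeled forests). -/
noncomputable def mulM (k : Type) [Semiring k] (f g : (List UTree) →₀ k) : (List UTree) →₀ k :=
  f.sum fun X a => g.sum fun Y b =>
    if foliageU X = squashU Y then Finsupp.single (bulletU X Y) (a * b) else 0

/-- The concatenation product on `kM`. -/
noncomputable def mulCat (k : Type) [Semiring k] (f g : (List UTree) →₀ k) : (List UTree) →₀ k :=
  f.sum fun X a => g.sum fun Y b => Finsupp.single (X ++ Y) (a * b)

/-- The product on the free associative algebra `kℕ*` (concatenation of compositions). -/
noncomputable def mulComp (k : Type) [Semiring k] (f g : (List ℕ) →₀ k) : (List ℕ) →₀ k :=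
  f.sum fun u a => g.sum fun v b => Finsupp.single (u ++ v) (a * b)

/-- The linear map `E : kL → kM` erasing node labels. -/
noncomputable def EL (k : Type) [Semiring k] : ((List LTree) →₀ k) →ₗ[k] ((List UTree) →₀ k) :=
  Finsupp.lmapDomain k k eraseF

/-- `π` on a single unlabeled tree: replace every node by the Lie bracket. -/
noncomputable def piT (k : Type) [Ring k] : UTree → (List ℕ) →₀ k
  | .leaf x => Finsupp.single [x] 1
  | .node t1 t2 => mulComp k (piT k t1) (piT k t2) - mulComp k (piT k t2) (piT k t1)

/-- `π` on an unlabeled forest: the concatenation product of the images of its parts. -/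
noncomputable def piF (k : Type) [Ring k] (X : List UTree) : (List ℕ) →₀ k :=
  (X.map (piT k)).foldr (mulComp k) (Finsupp.single [] 1)

/-- The Pólya action of a permutation of `Fin j` on a list: the entry in position
`i` of the result is the entry in position `σ⁻¹ i` of the input. -/
def permuteL {α : Type} [Inhabited α] {j : ℕ} (σ : Equiv.Perm (Fin j)) (X : List α) :
    List α :=
  List.ofFn fun i => X.getD ((σ⁻¹ i : Fin j) : ℕ) default
/-! ## The quiver Q, its paths, and the map ι -/

/-- The partition obtained by splitting one part `a+b` into parts `a` and `b`. -/
def applyStep (a b : ℕ) (p : Multiset ℕ) : Multiset ℕ := a ::ₘ b ::ₘ p.erase (a + b)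

/-- The vertex reached from `p` after performing the given splitting steps. -/
def sourceAfter (p : Multiset ℕ) (steps : List (ℕ × ℕ)) : Multiset ℕ :=
  steps.foldl (fun q s => applyStep s.1 s.2 q) p

/-- A path in the quiver `Q`, recorded by its destination vertex (a partition,
i.e. a multiset of parts) together with the list of branch symbols `[aᵢ|bᵢ]`
read from the destination towards the source. -/
structure QPath where
  dest : Multiset ℕ
  steps : List (ℕ × ℕ)
  deriving DecidableEq

/-- Each step is applicable in turn. -/
def SeqOK : Multiset ℕ → List (ℕ × ℕ) → Prop
  | _, [] => True
  | p, s :: rest => s.1 + s.2 ∈ p ∧ SeqOK (applyStep s.1 s.2 p) rest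

/-- A valid path of `Q`: positive parts, each step `[a|b]` has `0 < a < b`, and the
steps apply in sequence. -/
def QPath.Valid (P : QPath) : Prop :=
  (∀ x ∈ P.dest, 0 < x) ∧ (∀ s ∈ P.steps, 0 < s.1 ∧ s.1 < s.2) ∧ SeqOK P.dest P.steps

/-- The source vertex of a path. -/
def QPath.source (P : QPath) : Multiset ℕ := sourceAfter P.dest P.steps

/-- The canonical length-one forest attached to the edge with destination `q`
splitting a part `a + b` into `a` and `b`. -/
noncomputable def edgeForest (a b : ℕ) (q : Multiset ℕ) : List LTree :=
  LTree.node 1 (LTree.leaf a) (LTree.leaf b) :: leavesOf (q.erase (a + b)).toList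

/-- `ι` on the path with destination `p` and branch symbols `steps`:
the product (in `kℒ`) of the orbit sums of the edge forests, with the edge nearest
the destination leftmost, times the orbit sum of the source vertex. -/
noncomputable def iotaSteps (k : Type) [Semiring k] :
    Multiset ℕ → List (ℕ × ℕ) → ((List LTree) →₀ k)
  | p, [] => pol k (leavesOf p.toList)
  | p, s :: rest =>
      mulL k (pol k (edgeForest s.1 s.2 p)) (iotaSteps k (applyStep s.1 s.2 p) rest)

/-- `ι` of a single path. -/
noncomputable def iotaP (k : Type) [Semiring k] (P : QPath) : (List LTree) →₀ k :=
  iotaSteps k P.dest P.steps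

/-- The linear extension `ι : kQ → kℒ`. -/
noncomputable def iotaLinM (k : Type) [Semiring k] : (QPath →₀ k) →ₗ[k] ((List LTree) →₀ k) :=
  (Finsupp.lift ((List LTree) →₀ k) k QPath) (iotaP k)

/-! ## The branch monoid and its actions -/

/-- All ways to replace one leaf of value `a+b` in a tree by a node labeled `lab`
with leaves `a` and `b`. -/
def branchActTree (a b lab : ℕ) : LTree → List LTree
  | .leaf x =>
      if x = a + b then [LTree.node lab (LTree.leaf a) (LTree.leaf b)] else []
  | .node i t1 t2 =>
      (branchActTree a b lab t1).map (fun u => LTree.node i u t2) ++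
      (branchActTree a b lab t2).map (fun u => LTree.node i t1 u)

/-- All ways to replace one leaf of value `a+b` in a forest by a node labeled `lab`. -/
def branchWays (a b lab : ℕ) : List LTree → List (List LTree)
  | [] => []
  | t :: rest =>
      (branchActTree a b lab t).map (· :: rest) ++
      (branchWays a b lab rest).map (t :: ·)

/-- The action of the branch symbol `[a|b]` on `kL`. -/
noncomputable def actL1 (k : Type) [Semiring k] (s : ℕ × ℕ) (x : (List LTree) →₀ k) :
    (List LTree) →₀ k :=
  x.sum fun X a =>
    a • ((branchWays s.1 s.2 (forestLen X + 1) X).map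
      (fun Y => Finsupp.single Y (1 : k))).sum

/-- The action of a word of the branch monoid `ℬ*` on `kL`. -/
noncomputable def actLW (k : Type) [Semiring k] (w : List (ℕ × ℕ)) (x : (List LTree) →₀ k) :
    (List LTree) →₀ k :=
  w.foldl (fun y s => actL1 k s y) x

/-- The action of the branch symbol `[a|b]` on `kQ`: prepend an edge at the source
if the source has a part `a + b`, and `0` otherwise. -/
noncomputable def actQ1 (k : Type) [Semiring k] (s : ℕ × ℕ) (x : QPath →₀ k) : QPath →₀ k :=
  x.sum fun P a =>
    if s.1 + s.2 ∈ P.source then Finsupp.single ⟨P.dest, P.steps ++ [s]⟩ a else 0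

/-- The action of a word of `ℬ*` on `kQ`. -/
noncomputable def actQW (k : Type) [Semiring k] (w : List (ℕ × ℕ)) (x : QPath →₀ k) :
    QPath →₀ k :=
  w.foldl (fun y s => actQ1 k s y) x

/-- The path `𝔭(X)` associated to an (aligned) labeled forest `X`: the destination is
the partition of the squash of `X`, and the `i`-th branch symbol records the values of
the two subtrees of the node labeled `i`. -/
noncomputable def pPath (X : List LTree) : QPath :=
  ⟨(squash X : Multiset ℕ),
    (List.range (forestLen X)).map fun i => (forestFindLab (i + 1) X).getD (0, 0)⟩
/-! ## The equivalence ∼ on labeled forests -/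

/-- The subtree of a forest at a position (part index, path in the part). -/
def forestSubtreeAt (X : List LTree) (q : ℕ × List Bool) : Option LTree :=
  if h : q.1 < X.length then (X.get ⟨q.1, h⟩).subtreeAt q.2 else none

/-- Replace the subtree at a position of a forest. -/
def forestReplaceAt (X : List LTree) (q : ℕ × List Bool) (u : LTree) : List LTree :=
  X.set q.1 ((X.getD q.1 default).replaceAt q.2 u)

/-- The label of the parent node of the position `q`, if it exists. -/
def parentLabel (X : List LTree) (q : ℕ × List Bool) : Option ℕ :=
  if q.2 = [] then none
  else (forestSubtreeAt X (q.1, q.2.dropLast)).bind LTree.rootLabel?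

/-- Two positions address disjoint subtrees. -/
def PosDisjoint (q r : ℕ × List Bool) : Prop :=
  q.1 ≠ r.1 ∨ (q.1 = r.1 ∧ ¬ q.2 <+: r.2 ∧ ¬ r.2 <+: q.2)

/-- Move (1): exchange two disjoint non-leaf subtrees `U`, `V` of equal value such that
the labels of the parents of `U` and `V` (where these exist) are smaller than the root
labels of `U` and `V`. -/
def Move1 (X Y : List LTree) : Prop :=
  ∃ (q r : ℕ × List Bool) (U V : LTree),
    PosDisjoint q r ∧
    forestSubtreeAt X q = some U ∧ forestSubtreeAt X r = some V ∧
    U.rootLabel?.isSome ∧ V.rootLabel?.isSome ∧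
    U.value = V.value ∧
    (∀ m, (parentLabel X q = some m ∨ parentLabel X r = some m) →
      ∀ j, (U.rootLabel? = some j ∨ V.rootLabel? = some j) → m < j) ∧
    Y = forestReplaceAt (forestReplaceAt X q V) r U

/-- Exchange the entries in positions `i` and `j` of a list. -/
def swapEntries (X : List LTree) (i j : ℕ) : List LTree :=
  (X.set i (X.getD j default)).set j (X.getD i default)

/-- Move (2): exchange two parts of a forest. -/
def Move2 (X Y : List LTree) : Prop :=
  ∃ i j, i < j ∧ j < X.length ∧ Y = swapEntries X i j

/-- The equivalence relation `∼` generated by the two kinds of moves. -/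
def SimRel : List LTree → List LTree → Prop :=
  Relation.ReflTransGen (fun A B => Move1 A B ∨ Move2 A B)

/-! ## The labeling map F -/

/-- Preorder labeling of an unlabeled tree, starting after label `s`; returns the
labeled tree and the last label used. -/
def labelTreeAux : ℕ → UTree → LTree × ℕ
  | s, .leaf x => (LTree.leaf x, s)
  | s, .node t1 t2 =>
    let p1 := labelTreeAux (s + 1) t1
    let p2 := labelTreeAux p1.2 t2
    (LTree.node (s + 1) p1.1 p2.1, p2.2)

def labelFAux : ℕ → List UTree → List LTree
  | _, [] => []
  | s, t :: r =>
    let p := labelTreeAux s t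
    p.1 :: labelFAux p.2 r

/-- The labeled forest `F(X)`: label the nodes of each part in prefix (preorder)
order, the nodes of each part receiving smaller labels than those of later parts. -/
def labelF (X : List UTree) : List LTree := labelFAux 0 X

/-! ## Compositions from subsets, and alleys -/

/-- The composition of `n` attached to a subset `J ⊆ {1, …, n−1}`: the list of
successive differences of `{0, n} ∪ (S ∖ J)`. -/
def phi (n : ℕ) (J : Finset ℕ) : List ℕ :=
  let ts := ((Finset.Icc 1 (n - 1)) \ J).sort (· ≤ ·)
  List.zipWith (fun a b => b - a) (0 :: ts) (ts ++ [n])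

/-- The start of the maximal block of consecutive points containing `i` linked by
the transpositions in `J` (the transposition `s` links `s` and `s+1`). -/
def bStart (J : Finset ℕ) : ℕ → ℕ
  | 0 => 0
  | 1 => 1
  | i + 2 => if (i + 1) ∈ J then bStart J (i + 1) else i + 2

/-- The end of the maximal block of consecutive points of `{1, …, n}` containing `i`
linked by the transpositions in `J`. -/
def bEnd (J : Finset ℕ) (n : ℕ) (i : ℕ) : ℕ :=
  if h : i < n ∧ i ∈ J then bEnd J n (i + 1) else i
termination_by n - i
decreasing_by
  have := h.1
  omega

/-- The longest element `w_J` of the parabolic subgroup `W_J ≤ Sₙ`, described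
explicitly as the permutation of `{1, …, n}` reversing each maximal block of
consecutive points linked by the transpositions in `J`. -/
def wJpt (n : ℕ) (J : Finset ℕ) (i : ℕ) : ℕ := bStart J i + bEnd J n i - i

/-- The permutation `ω = w_J ⬝ w_{J ∪ {t}}` (as a right action on points). -/
def omegaPt (n : ℕ) (J : Finset ℕ) (t : ℕ) (i : ℕ) : ℕ :=
  wJpt n (insert t J) (wJpt n J i)

/-- The conjugate `s^ω` of the Coxeter generator `s` by `ω = w_J w_{J∪{t}}`:
the generator whose transposition exchanges the images of `s` and `s+1`. -/
def conjGen (n : ℕ) (J : Finset ℕ) (t : ℕ) (s : ℕ) : ℕ :=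
  min (omegaPt n J t s) (omegaPt n J t (s + 1))

/-- An alley `(J; s₁, …, s_l)`. -/
structure Alley where
  J : Finset ℕ
  s : List ℕ
  deriving DecidableEq

/-- A valid alley for `Sₙ`: `J ⊆ S = {1, …, n−1}` and `s₁, …, s_l` are distinct
elements of `J`. -/
def IsAlley (n : ℕ) (a : Alley) : Prop :=
  a.J ⊆ Finset.Icc 1 (n - 1) ∧ a.s.Nodup ∧ ∀ x ∈ a.s, x ∈ a.J

/-- The action of the Coxeter generator `t` on an alley:
`(J; s₁, …, s_l).t = (J^ω; s₁^ω, …, s_l^ω)` where `ω = w_J w_{J∪{t}}`. -/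
def actAlley (n : ℕ) (t : ℕ) (a : Alley) : Alley :=
  ⟨a.J.image (conjGen n a.J t), a.s.map (conjGen n a.J t)⟩

/-- The action of a word of the free monoid `S*` on alleys. -/
def actWordA (n : ℕ) (a : Alley) (w : List ℕ) : Alley :=
  w.foldl (fun b t => actAlley n t b) a

/-- The defining property of the forest `φ(a)` attached to an alley `a = (J; s₁,…,s_l)`:
it is a labeled forest of length `l` admitting a factorization `X₁ • ⋯ • X_l` into
length-one forests with `s(Xᵢ) = φ(J ∖ {s₁,…,s_{i−1}})` and
`f(Xᵢ) = φ(J ∖ {s₁,…,sᵢ})`; for `l = 0` it is the forest of leaves `φ(J)`. -/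
def AlleySpec (n : ℕ) (a : Alley) (X : List LTree) : Prop :=
  IsLForest X ∧ forestLen X = a.s.length ∧
  ∃ F : List (List LTree), F.length = a.s.length ∧
    (∀ A ∈ F, IsLForest A ∧ forestLen A = 1) ∧
    (∀ (i : ℕ) (h : i < F.length),
      squash (F.get ⟨i, h⟩) = phi n (a.J \ (a.s.take i).toFinset) ∧
      forestFoliage (F.get ⟨i, h⟩) = phi n (a.J \ (a.s.take (i + 1)).toFinset)) ∧
    X = F.foldr bullet (leavesOf (phi n (a.J \ a.s.toFinset)))
/-! ## The descent algebra of the symmetric group -/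

/-- `w ∈ X_J`: every descent of `w` (viewing `w` as a permutation of `{1, …, n}`
via `Fin n`) occurs at a position belonging to `J`. -/
def DescAllowed (n : ℕ) (J : Finset ℕ) (w : Equiv.Perm (Fin n)) : Prop :=
  ∀ i j : Fin n, (i : ℕ) + 1 = (j : ℕ) → w j < w i → ((i : ℕ) + 1) ∈ J

open Classical in
/-- The element `x_J = ∑_{w ∈ X_J} w` of the group algebra of `Sₙ`. -/
noncomputable def xJelt (k : Type) [Semiring k] (n : ℕ) (J : Finset ℕ) :
    MonoidAlgebra k (Equiv.Perm (Fin n)) :=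
  ∑ w : Equiv.Perm (Fin n),
    if DescAllowed n J w then MonoidAlgebra.single w 1 else 0

/-- The descent algebra `Σ(Sₙ)` as a submodule (by Solomon's theorem, a subalgebra)
of the group algebra: the span of the `x_J`, `J ⊆ S`. -/
noncomputable def descentSpan (k : Type) [Semiring k] (n : ℕ) :
    Submodule k (MonoidAlgebra k (Equiv.Perm (Fin n))) :=
  Submodule.span k {x | ∃ J ⊆ Finset.Icc 1 (n - 1), x = xJelt k n J}

/-! ## Spans -/

/-- `kℒₙ`: the span of Pólya orbit sums of labeled forests of value `n`. -/
noncomputable def LspanN (k : Type) [Semiring k] (n : ℕ) :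
    Submodule k ((List LTree) →₀ k) :=
  Submodule.span k {y | ∃ X, IsLForest X ∧ forestValue X = n ∧ y = pol k X}

/-- `kℒ`: the span of Pólya orbit sums of labeled forests. -/
noncomputable def LspanAll (k : Type) [Semiring k] : Submodule k ((List LTree) →₀ k) :=
  Submodule.span k {y | ∃ X, IsLForest X ∧ y = pol k X}

/-- `kℳ`: the span of Pólya orbit sums of unlabeled forests. -/
noncomputable def MspanAll (k : Type) [Semiring k] : Submodule k ((List UTree) →₀ k) :=
  Submodule.span k {y | ∃ X, IsUForest X ∧ y = polU k X}

/-- `kℒ⁺`: the span of Pólya orbit sums of aligned labeled forests. -/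
noncomputable def LplusSpan (k : Type) [Semiring k] : Submodule k ((List LTree) →₀ k) :=
  Submodule.span k {y | ∃ X, IsLForest X ∧ ForestAligned X ∧ y = pol k X}

/-- `kM⁺`: the span of aligned unlabeled forests. -/
noncomputable def MplusSpan (k : Type) [Semiring k] : Submodule k ((List UTree) →₀ k) :=
  Submodule.span k {y | ∃ X, IsUForest X ∧ ForestAlignedU X ∧ y = Finsupp.single X (1 : k)}

/-- The identity element of `kLₙ`: the sum of all compositions of `n`. -/
noncomputable def unitL (k : Type) [Semiring k] (n : ℕ) : (List LTree) →₀ k :=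
  ∑ c : Composition n, Finsupp.single (leavesOf c.blocks) 1

/-- `kQₙ`: the span of the valid paths of the quiver `Qₙ` (partitions of `n`). -/
noncomputable def QspanN (k : Type) [Semiring k] (n : ℕ) : Submodule k (QPath →₀ k) :=
  Submodule.span k
    {y | ∃ P : QPath, P.Valid ∧ P.dest.sum = n ∧ y = Finsupp.single P 1}

/-- The path-algebra product on `kQ`: the concatenation "`P` then `F`" when the
destination of `P` is the source of `F`, and `0` otherwise. -/
noncomputable def mulQ (k : Type) [Semiring k] (f g : QPath →₀ k) : QPath →₀ k :=
  f.sum fun P a => g.sum fun F b =>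
    if F.source = P.dest then Finsupp.single ⟨F.dest, F.steps ++ P.steps⟩ (a * b) else 0

/-! ## The ideals 𝒩 and 𝒥 -/

/-- The generators of the ideal `𝒩`: `(U,V) + (V,U)`. -/
def NGens (k : Type) [Semiring k] : Set ((List UTree) →₀ k) :=
  {g | ∃ U V : UTree, U.leavesPos ∧ V.leavesPos ∧
    g = Finsupp.single [UTree.node U V] 1 + Finsupp.single [UTree.node V U] 1}

/-- The generators of the ideal `𝒥`: the Jacobi sums
`(X,(Y,Z)) + (Y,(Z,X)) + (Z,(X,Y))`. -/
def JGens (k : Type) [Semiring k] : Set ((List UTree) →₀ k) :=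
  {g | ∃ X Y Z : UTree, X.leavesPos ∧ Y.leavesPos ∧ Z.leavesPos ∧
    g = Finsupp.single [UTree.node X (UTree.node Y Z)] 1 +
        Finsupp.single [UTree.node Y (UTree.node Z X)] 1 +
        Finsupp.single [UTree.node Z (UTree.node X Y)] 1}

/-- The two-sided ideal `𝒩 + 𝒥` of `kM` with respect to concatenation. -/
noncomputable def NJideal (k : Type) [Semiring k] : Submodule k ((List UTree) →₀ k) :=
  Submodule.span k {x | ∃ (A B : List UTree) (g : (List UTree) →₀ k),
    (g ∈ NGens k ∨ g ∈ JGens k) ∧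
    x = mulCat k (Finsupp.single A (1 : k)) (mulCat k g (Finsupp.single B 1))}

/-! ## Branch relations -/

/-- The two-term branch relation `[a|b][c|d] − [c|d][a|b]`. -/
noncomputable def Rel1 (k : Type) [Ring k] (a b c d : ℕ) : (List (ℕ × ℕ)) →₀ k :=
  Finsupp.single [(a, b), (c, d)] 1 - Finsupp.single [(c, d), (a, b)] 1

/-- The three-term branch relation
`[a|b][c|d][x|y] + [x|y][a|b][c|d] − [a|b][x|y][c|d] − [c|d][x|y][a|b]`. -/
noncomputable def Rel2 (k : Type) [Ring k] (a b c d x y : ℕ) : (List (ℕ × ℕ)) →₀ k :=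
  Finsupp.single [(a, b), (c, d), (x, y)] 1 + Finsupp.single [(x, y), (a, b), (c, d)] 1
  - Finsupp.single [(a, b), (x, y), (c, d)] 1 - Finsupp.single [(c, d), (x, y), (a, b)] 1

/-- The side condition on `a, b, c, d`: positive, `a < b`, `c < d`,
`a+b ∉ {c,d}` and `c+d ∉ {a,b}`. -/
def Cond1 (a b c d : ℕ) : Prop :=
  0 < a ∧ a < b ∧ 0 < c ∧ c < d ∧ a + b ≠ c ∧ a + b ≠ d ∧ c + d ≠ a ∧ c + d ≠ b

/-- The set `ℛ ⊆ kℬ*` of branch relations. -/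
noncomputable def BranchRels (k : Type) [Ring k] : Set ((List (ℕ × ℕ)) →₀ k) :=
  {r | ∃ a b c d, Cond1 a b c d ∧ r = Rel1 k a b c d} ∪
  {r | ∃ a b c d x y, Cond1 a b c d ∧ 0 < x ∧ x < y ∧
    ((a + b = c + d ∧ (a + b = x ∨ a + b = y)) ∨
      ((x + y = a ∨ x + y = b) ∧ (x + y = c ∨ x + y = d))) ∧
    r = Rel2 k a b c d x y}

/-! In `X • Y` the nodes labeled at most `ℓ(X)` are exactly the nodes of `X`, so cutting
`X • Y` at level `ℓ(X)` gives back `X` and `Y`. Hence `(A, B) ↦ A • B` is injective on the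
composable pairs of rearrangements of `X` and `Y`, and a rearrangement of the trees of `A • B`
is again such a product, its lower parts rearranging `A` and its upper parts rearranging `B`.
So `[X]•[Y]` is the indicator of a finite rearrangement-closed set of labeled forests of value
`n`, that is, a sum of orbit sums. -/

namespace LTree

/-- Left inverse of `shift m` (labels are decreased with truncated subtraction). -/
def unshift (m : ℕ) : LTree → LTree
  | leaf x => leaf x
  | node i t1 t2 => node (i - m) (t1.unshift m) (t2.unshift m)

/-- The part of a tree made of its nodes labeled at most `L`. -/
def lowerPart (L : ℕ) : LTree → LTree
  | leaf x => leaf x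
  | node i t1 t2 =>
    if L < i then leaf (t1.value + t2.value) else node i (t1.lowerPart L) (t2.lowerPart L)

/-- The trees to graft onto the leaves of `lowerPart L t`, left to right, to get `t` back. -/
def upperParts (L : ℕ) : LTree → List LTree
  | leaf x => [leaf x]
  | node i t1 t2 => if L < i then [node i t1 t2] else t1.upperParts L ++ t2.upperParts L

@[simp]
lemma value_shift (m : ℕ) (t : LTree) : (t.shift m).value = t.value := by
  induction t with
  | leaf x => rfl
  | node i t1 t2 ih1 ih2 => simp [shift, value, ih1, ih2]

@[simp]
lemma foliage_shift (m : ℕ) (t : LTree) : (t.shift m).foliage = t.foliage := by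
  induction t with
  | leaf x => rfl
  | node i t1 t2 ih1 ih2 => simp [shift, foliage, ih1, ih2]

lemma labels_shift (m : ℕ) (t : LTree) : (t.shift m).labels = t.labels.map (· + m) := by
  induction t with
  | leaf x => rfl
  | node i t1 t2 ih1 ih2 => simp [shift, labels, ih1, ih2]

@[simp]
lemma unshift_shift (m : ℕ) (t : LTree) : (t.shift m).unshift m = t := by
  induction t with
  | leaf x => rfl
  | node i t1 t2 ih1 ih2 => simp [shift, unshift, ih1, ih2]

lemma shift_injective (m : ℕ) : Function.Injective (shift m) :=
  Function.LeftInverse.injective (unshift_shift m)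

lemma value_eq_sum_foliage (t : LTree) : t.value = t.foliage.sum := by
  induction t with
  | leaf x => simp [value, foliage]
  | node i t1 t2 ih1 ih2 => simp [value, foliage, ih1, ih2]

lemma numNodes_eq_length_labels (t : LTree) : t.numNodes = t.labels.length := by
  induction t with
  | leaf x => rfl
  | node i t1 t2 ih1 ih2 => simp [numNodes, labels, ih1, ih2]

lemma incrFrom.mono {p q : ℕ} (h : q ≤ p) : ∀ {t : LTree}, t.incrFrom p → t.incrFrom q
  | leaf _, _ => trivial
  | node _ _ _, ⟨hi, h1, h2⟩ => ⟨h.trans_lt hi, h1, h2⟩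

lemma incrFrom.shift (m : ℕ) :
    ∀ {p : ℕ} {t : LTree}, t.incrFrom p → (t.shift m).incrFrom (p + m)
  | _, leaf _, _ => trivial
  | _, node _ _ _, ⟨hi, h1, h2⟩ => ⟨by omega, h1.shift m, h2.shift m⟩

lemma graft_lowerPart_upperParts (L : ℕ) (t : LTree) (r : List LTree) :
    (t.lowerPart L).graft (t.upperParts L ++ r) = (t, r) := by
  induction t generalizing r with
  | leaf x => rfl
  | node i t1 t2 ih1 ih2 =>
    by_cases h : L < i
    · simp [lowerPart, upperParts, h, graft]
    · simp [lowerPart, upperParts, h, graft, ih1, ih2]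

lemma foliage_eq_flatMap_upperParts (L : ℕ) (t : LTree) :
    t.foliage = (t.upperParts L).flatMap foliage := by
  induction t with
  | leaf x => simp [upperParts, foliage]
  | node i t1 t2 ih1 ih2 =>
    by_cases h : L < i
    · simp [upperParts, h]
    · simp [upperParts, h, foliage, ih1, ih2]

lemma foliage_lowerPart (L : ℕ) (t : LTree) :
    (t.lowerPart L).foliage = (t.upperParts L).map value := by
  induction t with
  | leaf x => rfl
  | node i t1 t2 ih1 ih2 =>
    by_cases h : L < i
    · simp [lowerPart, upperParts, h, foliage, value]
    · simp [lowerPart, upperParts, h, foliage, ih1, ih2]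

lemma labels_perm_lowerPart_upperParts (L : ℕ) (t : LTree) :
    t.labels.Perm ((t.lowerPart L).labels ++ (t.upperParts L).flatMap labels) := by
  induction t with
  | leaf x => simp [lowerPart, upperParts, labels]
  | node i t1 t2 ih1 ih2 =>
    by_cases h : L < i
    · simp [lowerPart, upperParts, h, labels]
    · simp only [lowerPart, upperParts, h, if_false, labels, List.flatMap_append, List.cons_append]
      refine ((ih1.append ih2).trans ?_).cons i
      simp only [List.append_assoc]
      exact List.Perm.append_left _ (List.perm_append_comm_assoc _ _ _)

lemma incrFrom_of_lowerPart_upperParts {L p : ℕ} (hp : p ≤ L) {t : LTree}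
    (hb : (t.lowerPart L).incrFrom p) (ha : ∀ u ∈ t.upperParts L, u.incrFrom L) :
    t.incrFrom p := by
  induction t generalizing p with
  | leaf x => trivial
  | node i t1 t2 ih1 ih2 =>
    by_cases h : L < i
    · exact (ha _ (by simp [upperParts, h])).mono hp
    · simp only [lowerPart, h, if_false, incrFrom] at hb
      have hi : i ≤ L := not_lt.1 h
      exact ⟨hb.1, ih1 hi hb.2.1 fun u hu => ha u (by simp [upperParts, h, hu]),
        ih2 hi hb.2.2 fun u hu => ha u (by simp [upperParts, h, hu])⟩

lemma exists_graft_append_eq {L : ℕ} (t : LTree) {ys : List LTree}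
    (ht : ∀ j ∈ t.labels, j ≤ L) (hys : ∀ y ∈ ys, y.incrFrom L) (hf : t.foliage = ys.map value)
    (r : List LTree) :
    ∃ z, t.graft (ys ++ r) = (z, r) ∧ z.lowerPart L = t ∧ z.upperParts L = ys := by
  induction t generalizing ys r with
  | leaf x =>
    obtain ⟨y, rfl, hy⟩ := List.map_eq_singleton_iff.1 hf.symm
    refine ⟨y, rfl, ?_, by cases y <;> simp_all [upperParts, incrFrom]⟩
    cases y with
    | leaf v => simp_all [lowerPart, value]
    | node j u1 u2 => simp_all [lowerPart, value, incrFrom]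
  | node i t1 t2 ih1 ih2 =>
    have hi : ¬ L < i := not_lt.2 (ht i (by simp [labels]))
    obtain ⟨ys1, ys2, rfl, h1, h2⟩ := List.map_eq_append_iff.1 hf.symm
    obtain ⟨z1, hz1, hb1, ha1⟩ := ih1 (fun j hj => ht j (by simp [labels, hj]))
      (fun y hy => hys y (by simp [hy])) h1.symm (ys2 ++ r)
    obtain ⟨z2, hz2, hb2, ha2⟩ := ih2 (fun j hj => ht j (by simp [labels, hj]))
      (fun y hy => hys y (by simp [hy])) h2.symm r
    refine ⟨node i z1 z2, ?_, ?_, ?_⟩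
    · simp [graft, hz1, hz2]
    · simp [lowerPart, hi, hb1, hb2]
    · simp [upperParts, hi, ha1, ha2]

end LTree

open LTree

lemma forestLen_eq_length_forestLabels (W : List LTree) :
    forestLen W = (forestLabels W).length := by
  simp [forestLen, forestLabels, List.length_flatMap, ← numNodes_eq_length_labels]

lemma forestValue_eq_sum_forestFoliage (W : List LTree) :
    forestValue W = (forestFoliage W).sum := by
  simp [forestValue, forestFoliage, List.flatMap_def, List.sum_flatten, Function.comp_def,
    ← value_eq_sum_foliage]

@[simp]
lemma squash_map_shift (m : ℕ) (B : List LTree) : squash (B.map (shift m)) = squash B := by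
  simp [squash]

@[simp]
lemma forestFoliage_map_shift (m : ℕ) (B : List LTree) :
    forestFoliage (B.map (shift m)) = forestFoliage B := by
  simp [forestFoliage, List.flatMap_map]

lemma forestLabels_map_shift (m : ℕ) (B : List LTree) :
    forestLabels (B.map (shift m)) = (forestLabels B).map (· + m) := by
  simp [forestLabels, labels_shift, List.map_flatMap, List.flatMap_map]

lemma IsLForest.perm {A B : List LTree} (h : A.Perm B) (hA : IsLForest A) : IsLForest B := by
  obtain ⟨hincr, hlab, hpos⟩ := hA
  refine ⟨fun t ht => hincr t (h.mem_iff.2 ht), ?_,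
    fun x hx => hpos x ((h.flatMap_right _).mem_iff.2 hx)⟩
  rw [forestLen, ← (h.map _).sum_eq]
  exact (h.flatMap_right _).symm.trans hlab

lemma IsLForest.le_forestLen {X : List LTree} (hX : IsLForest X) :
    ∀ j ∈ forestLabels X, j ≤ forestLen X := by
  intro j hj
  have := List.mem_range'_1.1 (hX.2.1.mem_iff.1 hj)
  omega

lemma forestFoliage_flatMap_upperParts (L : ℕ) (W : List LTree) :
    forestFoliage (W.flatMap (upperParts L)) = forestFoliage W := by
  simp [forestFoliage, List.flatMap_assoc, ← foliage_eq_flatMap_upperParts]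

lemma forestFoliage_map_lowerPart (L : ℕ) (W : List LTree) :
    forestFoliage (W.map (lowerPart L)) = squash (W.flatMap (upperParts L)) := by
  simp [forestFoliage, squash, foliage_lowerPart, List.map_flatMap, List.flatMap_map]

lemma forestLabels_perm_lowerPart_upperParts (L : ℕ) (W : List LTree) :
    (forestLabels W).Perm
      (forestLabels (W.map (lowerPart L)) ++ forestLabels (W.flatMap (upperParts L))) := by
  induction W with
  | nil => simp [forestLabels]
  | cons z W ih =>
    simp only [forestLabels, List.map_cons, List.flatMap_cons, List.flatMap_append] at ih ⊢
    refine ((labels_perm_lowerPart_upperParts L z).append ih).trans ?_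
    simp only [List.append_assoc]
    exact List.Perm.append_left _ (List.perm_append_comm_assoc _ _ _)

lemma graftForest_lowerPart_upperParts (L : ℕ) (W r : List LTree) :
    graftForest (W.map (lowerPart L)) (W.flatMap (upperParts L) ++ r) = W := by
  induction W with
  | nil => rfl
  | cons z W ih => simp [graftForest, graft_lowerPart_upperParts, ih]

lemma lowerPart_upperParts_graftForest {L : ℕ} (X : List LTree) {ys : List LTree}
    (hX : ∀ j ∈ forestLabels X, j ≤ L) (hys : ∀ y ∈ ys, y.incrFrom L)
    (hf : forestFoliage X = ys.map value) :
    (graftForest X ys).map (lowerPart L) = X ∧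
      (graftForest X ys).flatMap (upperParts L) = ys := by
  induction X generalizing ys with
  | nil =>
    obtain rfl : ys = [] := List.map_eq_nil_iff.1 hf.symm
    simp [graftForest]
  | cons t X ih =>
    obtain ⟨ys1, ys2, rfl, h1, h2⟩ := List.map_eq_append_iff.1 hf.symm
    obtain ⟨z, hz, hb, ha⟩ := exists_graft_append_eq t
      (fun j hj => hX j (by simp [forestLabels, hj])) (fun y hy => hys y (by simp [hy])) h1.symm ys2
    obtain ⟨ihb, iha⟩ := ih (fun j hj => hX j (by simp_all [forestLabels]))
      (fun y hy => hys y (by simp [hy])) h2.symm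
    simp [graftForest, hz, hb, ha, ihb, iha]

lemma bullet_lowerPart_upperParts {X Y : List LTree} (hX : IsLForest X) (hY : IsLForest Y)
    (h : forestFoliage X = squash Y) :
    (bullet X Y).map (lowerPart (forestLen X)) = X ∧
      (bullet X Y).flatMap (upperParts (forestLen X)) = Y.map (shift (forestLen X)) := by
  refine lowerPart_upperParts_graftForest X hX.le_forestLen (fun y hy => ?_) ?_
  · obtain ⟨y₀, hy₀, rfl⟩ := List.mem_map.1 hy
    simpa using (hY.1 y₀ hy₀).shift (forestLen X)
  · rwa [← squash, squash_map_shift]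

lemma isLForest_of_lowerPart_upperParts {L : ℕ} {W A B : List LTree} (hA : IsLForest A)
    (hL : forestLen A = L) (hB : IsLForest B) (hWA : W.map (lowerPart L) = A)
    (hWB : W.flatMap (upperParts L) = B.map (shift L)) : IsLForest W := by
  have hlabels : (forestLabels W).Perm (List.range' 1 (L + forestLen B)) := by
    refine (forestLabels_perm_lowerPart_upperParts L W).trans ?_
    rw [hWA, hWB, forestLabels_map_shift, ← List.range'_append (step := 1), ← hL]
    refine hA.2.1.append ((hB.2.1.map _).trans (List.Perm.of_eq ?_))
    rw [one_mul, add_comm, ← List.map_add_range']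
    simp [add_comm]
  refine ⟨fun z hz => ?_, ?_, fun x hx => ?_⟩
  · refine incrFrom_of_lowerPart_upperParts (Nat.zero_le L) (hA.1 _ ?_) fun u hu => ?_
    · exact hWA ▸ List.mem_map_of_mem hz
    · obtain ⟨y, hy, rfl⟩ := List.mem_map.1 (hWB ▸ List.mem_flatMap.2 ⟨z, hz, hu⟩)
      simpa using (hB.1 y hy).shift L
  · rwa [forestLen_eq_length_forestLabels, hlabels.length_eq, List.length_range']
  · rw [← forestFoliage_flatMap_upperParts L, hWB, forestFoliage_map_shift] at hx
    exact hB.2.2 x hx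

lemma forestValue_eq_of_flatMap_upperParts {L : ℕ} {W B : List LTree}
    (hWB : W.flatMap (upperParts L) = B.map (shift L)) : forestValue W = forestValue B := by
  rw [forestValue_eq_sum_forestFoliage, forestValue_eq_sum_forestFoliage,
    ← forestFoliage_flatMap_upperParts L, hWB, forestFoliage_map_shift]

lemma isLForest_bullet {X Y : List LTree} (hX : IsLForest X) (hY : IsLForest Y)
    (h : forestFoliage X = squash Y) : IsLForest (bullet X Y) :=
  have hXY := bullet_lowerPart_upperParts hX hY h
  isLForest_of_lowerPart_upperParts hX rfl hY hXY.1 hXY.2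

lemma forestValue_bullet {X Y : List LTree} (hX : IsLForest X) (hY : IsLForest Y)
    (h : forestFoliage X = squash Y) : forestValue (bullet X Y) = forestValue Y :=
  forestValue_eq_of_flatMap_upperParts (bullet_lowerPart_upperParts hX hY h).2

lemma eq_of_bullet_eq {X Y X' Y' : List LTree} (hX : IsLForest X) (hY : IsLForest Y)
    (h : forestFoliage X = squash Y) (hX' : IsLForest X') (hY' : IsLForest Y')
    (h' : forestFoliage X' = squash Y') (hlen : forestLen X = forestLen X')
    (heq : bullet X Y = bullet X' Y') : X = X' ∧ Y = Y' := by
  obtain ⟨hXlow, hYup⟩ := bullet_lowerPart_upperParts hX hY h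
  obtain ⟨hXlow', hYup'⟩ := bullet_lowerPart_upperParts hX' hY' h'
  rw [← hlen, ← heq] at hXlow' hYup'
  exact ⟨hXlow.symm.trans hXlow', List.map_injective_iff.2 (shift_injective _)
    (hYup.symm.trans hYup')⟩

lemma exists_bullet_eq_of_perm {X Y W : List LTree} (hX : IsLForest X) (hY : IsLForest Y)
    (h : forestFoliage X = squash Y) (hW : W.Perm (bullet X Y)) :
    ∃ X' Y', X'.Perm X ∧ Y'.Perm Y ∧ forestFoliage X' = squash Y' ∧ bullet X' Y' = W := by
  set L := forestLen X
  obtain ⟨hXlow, hYup⟩ := bullet_lowerPart_upperParts hX hY h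
  have hup : (W.flatMap (upperParts L)).Perm (Y.map (shift L)) := hYup ▸ hW.flatMap_right _
  have hshift : ((W.flatMap (upperParts L)).map (unshift L)).map (shift L) =
      W.flatMap (upperParts L) := by
    refine (List.map_map ..).trans (List.map_congr_left fun u hu => ?_) |>.trans (List.map_id _)
    obtain ⟨y, -, rfl⟩ := List.mem_map.1 (hup.mem_iff.1 hu)
    simp
  have hX' : (W.map (lowerPart L)).Perm X := hXlow ▸ hW.map _
  refine ⟨W.map (lowerPart L), (W.flatMap (upperParts L)).map (unshift L), hX', ?_, ?_, ?_⟩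
  · simpa [Function.comp_def] using hup.map (unshift L)
  · rw [forestFoliage_map_lowerPart]
    conv_lhs => rw [← hshift]
    exact squash_map_shift L _
  · have hlen : forestLen (W.map (lowerPart L)) = L := (hX'.map numNodes).sum_eq
    rw [bullet, hlen, hshift]
    simpa using graftForest_lowerPart_upperParts L W []

/-- Peel off one orbit at a time: `pol k Z` is the indicator of the orbit of `Z`. -/
lemma sum_single_mem_LspanN (k : Type) [Semiring k] (n : ℕ) (S : Finset (List LTree))
    (hS : ∀ Z ∈ S, IsLForest Z ∧ forestValue Z = n)
    (hperm : ∀ Z ∈ S, ∀ W, W.Perm Z → W ∈ S) :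
    ∑ Z ∈ S, Finsupp.single Z (1 : k) ∈ LspanN k n := by
  classical
  induction S using Finset.strongInduction with
  | H S ih =>
  rcases S.eq_empty_or_nonempty with rfl | ⟨Z, hZ⟩
  · simp
  have horbit : Z.permutations.toFinset ⊆ S := fun W hW =>
    hperm Z hZ W (List.mem_permutations.1 (List.mem_toFinset.1 hW))
  rw [← Finset.sum_sdiff horbit]
  refine add_mem (ih _ (Finset.sdiff_ssubset horbit ⟨Z, by simp⟩) (fun W hW => hS W ?_)
    (fun W hW V hV => ?_)) (Submodule.subset_span ⟨Z, (hS Z hZ).1, (hS Z hZ).2, rfl⟩)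
  · exact (Finset.mem_sdiff.1 hW).1
  · obtain ⟨hWS, hWZ⟩ := Finset.mem_sdiff.1 hW
    simp only [List.mem_toFinset, List.mem_permutations, Finset.mem_sdiff] at hWZ ⊢
    exact ⟨hperm W hWS V hV, fun hVZ => hWZ (hV.symm.trans hVZ)⟩

def composablePerms (X Y : List LTree) : Finset (List LTree × List LTree) :=
  (X.permutations.toFinset ×ˢ Y.permutations.toFinset).filter
    fun p => forestFoliage p.1 = squash p.2

lemma mem_composablePerms {X Y : List LTree} {p : List LTree × List LTree} :
    p ∈ composablePerms X Y ↔ p.1.Perm X ∧ p.2.Perm Y ∧ forestFoliage p.1 = squash p.2 := by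
  simp [composablePerms, and_assoc]

lemma mulL_pol_pol (k : Type) [Semiring k] (X Y : List LTree) :
    mulL k (pol k X) (pol k Y) =
      ∑ p ∈ composablePerms X Y, Finsupp.single (bullet p.1 p.2) (1 : k) := by
  rw [composablePerms, Finset.sum_filter, Finset.sum_product, mulL, pol,
    ← Finsupp.sum_finsetSum_index (by simp) fun A a₁ a₂ => ?_]
  · refine Finset.sum_congr rfl fun A _ => ?_
    rw [Finsupp.sum_single_index (by simp), pol, ← Finsupp.sum_finsetSum_index (by simp)]
    · simp
    · intro B b₁ b₂
      split_ifs <;> simp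
  · rw [← Finsupp.sum_add]
    congr 1
    ext B b
    split_ifs <;> simp [add_mul]

lemma bullet_injOn_composablePerms {X Y : List LTree} (hX : IsLForest X) (hY : IsLForest Y) :
    Set.InjOn (fun p : List LTree × List LTree => bullet p.1 p.2) (composablePerms X Y) := by
  rintro ⟨A, B⟩ hAB ⟨A', B'⟩ hAB' heq
  obtain ⟨hA, hB, h⟩ := mem_composablePerms.1 hAB
  obtain ⟨hA', hB', h'⟩ := mem_composablePerms.1 hAB'
  have hlen : forestLen A = forestLen A' := (hA.map _).sum_eq.trans (hA'.map _).sum_eq.symm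
  exact Prod.ext_iff.2 <| eq_of_bullet_eq (hX.perm hA.symm) (hY.perm hB.symm) h
    (hX.perm hA'.symm) (hY.perm hB'.symm) h' hlen heq

theorem polya_orbit_sums_subalgebra_general (k : Type) [Field k] (n : ℕ)
    (X Y : List LTree) (hX : IsLForest X)
    (hY : IsLForest Y) (hYn : forestValue Y = n) :
    mulL k (pol k X) (pol k Y) ∈ LspanN k n := by
  rw [mulL_pol_pol, ← Finset.sum_image (f := fun Z => Finsupp.single Z (1 : k))
    (bullet_injOn_composablePerms hX hY)]
  refine sum_single_mem_LspanN k n _ (fun Z hZ => ?_) (fun Z hZ W hW => ?_) <;>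
    obtain ⟨⟨A, B⟩, hAB, rfl⟩ := Finset.mem_image.1 hZ <;>
    obtain ⟨hA, hB, h⟩ := mem_composablePerms.1 hAB
  · have hA' := hX.perm hA.symm
    have hB' := hY.perm hB.symm
    exact ⟨isLForest_bullet hA' hB' h,
      (forestValue_bullet hA' hB' h).trans ((hB.map _).sum_eq.trans hYn)⟩
  · obtain ⟨A', B', hA', hB', h', rfl⟩ :=
      exists_bullet_eq_of_perm (hX.perm hA.symm) (hY.perm hB.symm) h hW
    exact Finset.mem_image_of_mem _
      ((mem_composablePerms (p := (A', B'))).2 ⟨hA'.trans hA, hB'.trans hB, h'⟩)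

/-- **`kℒₙ` is a subalgebra of `kLₙ` (Proposition `LSubalgebra`).** The product of two
Pólya orbit sums of labeled forests of value `n` is a `k`-linear combination of
Pólya orbit sums of labeled forests of value `n`. -/
theorem polya_orbit_sums_subalgebra (k : Type) [Field k] [CharZero k] (n : ℕ)
    (X Y : List LTree) (hX : IsLForest X) (hXn : forestValue X = n)
    (hY : IsLForest Y) (hYn : forestValue Y = n) :
    mulL k (pol k X) (pol k Y) ∈ LspanN k n :=
  polya_orbit_sums_subalgebra_general k n X Y hX hY hYn
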